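/- There exists a unique δ** ∈ (0,1) such that π^D(δ**) = π^EAO, π^D(δ) > π^EAO for every δ ∈ (δ**,1), and π^D(δ) < π^EAO for every δ ∈ (0,δ**); moreover δ** < δ̄ := π^EAO / (∫_{θ*}^1 𝒢(ψ(θ)) f(θ) dθ). Here π^D(δ) := max_{x∈[0,1]} Π^D(x,δ) and π^EAO := max_{p∈[0,1]} (1−F(p))·𝒢(p). -/

import Mathlib

open MeasureTheory

/-- `F(x) = ∫₀^x f`, with the convention that it is `0` for `x ≤ 0`. -/
noncomputable def cdf (f : ℝ → ℝ) (x : ℝ) : ℝ := ∫ t in Set.Ioc (0:ℝ) x, f t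

/-- `𝒢(x) = ∫₀^x G(y) dy`, the left-hand integral of the cdf of `g` (`= 0` for `x ≤ 0`). -/
noncomputable def calG (g : ℝ → ℝ) (x : ℝ) : ℝ := ∫ y in Set.Ioc (0:ℝ) x, cdf g y

/-- `μ = ∫₀¹ ω g(ω) dω`, the mean cost. -/
noncomputable def muG (g : ℝ → ℝ) : ℝ := ∫ t in Set.Ioc (0:ℝ) 1, t * g t

/-- The virtual valuation `ψ(θ) = θ − (1 − F(θ))/f(θ)`. -/
noncomputable def psi (f : ℝ → ℝ) (θ : ℝ) : ℝ := θ - (1 - cdf f θ) / f θ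

/-- The truncated virtual valuation `ψ(θ,x) = θ − (F(x) − F(θ))/f(θ)`. -/
noncomputable def psiT (f : ℝ → ℝ) (x θ : ℝ) : ℝ := θ - (cdf f x - cdf f θ) / f θ

/-- The dynamic-mechanism profit
`Π^D(x,δ) = (1−F(x))·(x − δ·∫_{θ**(x)}^x G(ψ(θ,x)) dθ − μ) + δ·∫_{θ**(x)}^x 𝒢(ψ(θ,x)) f(θ) dθ`
for `x ∈ (0,1]`, with `Π^D(0,δ) = −μ`; here `θss` is the map `x ↦ θ**(x)`. -/
noncomputable def PiD (f g : ℝ → ℝ) (θss : ℝ → ℝ) (x δ : ℝ) : ℝ :=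
  if x = 0 then -(muG g)
  else (1 - cdf f x) * (x - δ * (∫ θ in (θss x)..x, cdf g (psiT f x θ)) - muG g)
    + δ * ∫ θ in (θss x)..x, calG g (psiT f x θ) * f θ

/-!
The optimal ex-ante profit lies strictly between `π^D(0)` and the full-commitment profit
`A = ∫_{θ*}^1 𝒢(ψ(θ)) f(θ) dθ`. For the upper bound, `𝒢` is convex with derivative `G`, so
`𝒢(ψ(θ)) ≥ 𝒢(p) + G(p)(ψ(θ) − p)`; integrating against `f` over `[p, 1]` and using Myerson's
identity `∫_p^1 ψ f = p (1 − F(p))` gives `(1 − F(p)) 𝒢(p) < A`. Each `Π^D(x, ·)` is affine, so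
`π^D` is convex; `π^D(0) < π^EAO`, and as `x → 1` the same convexity estimate shows
`π^D(δ) > δ A`, in particular `π^D(δ̄) > π^EAO`. A convex function that is below a level at `0`
and above it at `δ̄` crosses it exactly once, and before `δ̄`.
-/

open Set Filter Topology intervalIntegral

section Primitive

variable {φ : ℝ → ℝ}

lemma cdf_of_nonpos {x : ℝ} (hx : x ≤ 0) : cdf φ x = 0 := by
  simp [cdf, Ioc_eq_empty_of_le hx]

lemma cdf_max_zero (x : ℝ) : cdf φ (max x 0) = cdf φ x := by
  rcases le_total x 0 with hx | hx
  · rw [max_eq_right hx, cdf_of_nonpos le_rfl, cdf_of_nonpos hx]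
  · rw [max_eq_left hx]

lemma cdf_eq_integral {x : ℝ} (hx : 0 ≤ x) : cdf φ x = ∫ t in (0 : ℝ)..x, φ t :=
  (integral_of_le hx).symm

lemma cdf_sub_cdf (hφ : ContinuousOn φ (Icc 0 1)) {a b : ℝ} (ha : a ∈ Icc (0 : ℝ) 1)
    (hb : b ∈ Icc (0 : ℝ) 1) : cdf φ b - cdf φ a = ∫ t in a..b, φ t := by
  rw [cdf_eq_integral hb.1, cdf_eq_integral ha.1]
  exact integral_interval_sub_left
    (hφ.mono (uIcc_subset_Icc ⟨le_rfl, zero_le_one⟩ hb)).intervalIntegrable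
    (hφ.mono (uIcc_subset_Icc ⟨le_rfl, zero_le_one⟩ ha)).intervalIntegrable

lemma continuousOn_cdf (hφ : ContinuousOn φ (Icc 0 1)) : ContinuousOn (cdf φ) (Iic 1) := by
  have hIcc : ContinuousOn (cdf φ) (Icc 0 1) :=
    intervalIntegral.continuousOn_primitive (hφ.integrableOn_Icc)
  have hmax : ContinuousOn (fun x : ℝ => max x 0) (Iic 1) := by fun_prop
  refine (hIcc.comp hmax fun x hx => ⟨le_max_right x 0, max_le hx zero_le_one⟩).congr ?_
  intro x _
  exact (cdf_max_zero x).symm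

lemma hasDerivAt_cdf (hφ : ContinuousOn φ (Icc 0 1)) {y : ℝ} (hy : y ∈ Ioo (0 : ℝ) 1) :
    HasDerivAt (cdf φ) (φ y) y := by
  have hnhds : Icc (0 : ℝ) 1 ∈ 𝓝 y := Icc_mem_nhds hy.1 hy.2
  have hint : IntervalIntegrable φ volume 0 y :=
    (hφ.mono (uIcc_subset_Icc ⟨le_rfl, zero_le_one⟩ ⟨hy.1.le, hy.2.le⟩)).intervalIntegrable
  refine (integral_hasDerivAt_right hint
    ⟨Icc 0 1, hnhds, hφ.integrableOn_Icc.aestronglyMeasurable⟩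
    (hφ.continuousAt hnhds)).congr_of_eventuallyEq ?_
  filter_upwards [Ioi_mem_nhds hy.1] with u hu
  exact cdf_eq_integral (le_of_lt hu)

variable (hφ : ContinuousOn φ (Icc 0 1)) (hpos : ∀ t ∈ Ioo (0 : ℝ) 1, 0 < φ t)
include hφ hpos

lemma strictMonoOn_cdf : StrictMonoOn (cdf φ) (Icc 0 1) := by
  intro a ha b hb hab
  rw [← sub_pos, cdf_sub_cdf hφ ha hb]
  refine intervalIntegral.intervalIntegral_pos_of_pos_on
    (hφ.mono (uIcc_subset_Icc ha hb)).intervalIntegrable (fun t ht => hpos t ?_) hab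
  exact ⟨ha.1.trans_lt ht.1, ht.2.trans_le hb.2⟩

lemma monotoneOn_cdf : MonotoneOn (cdf φ) (Iic 1) := by
  intro a ha b hb hab
  rw [← cdf_max_zero a, ← cdf_max_zero b]
  exact (strictMonoOn_cdf hφ hpos).monotoneOn ⟨le_max_right a 0, max_le ha zero_le_one⟩
    ⟨le_max_right b 0, max_le hb zero_le_one⟩ (max_le_max_right 0 hab)

lemma cdf_nonneg {x : ℝ} (hx : x ≤ 1) : 0 ≤ cdf φ x := by
  calc 0 = cdf φ 0 := (cdf_of_nonpos le_rfl).symm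
    _ ≤ cdf φ (max x 0) := monotoneOn_cdf hφ hpos (mem_Iic.2 zero_le_one)
        (max_le hx zero_le_one) (le_max_right x 0)
    _ = cdf φ x := cdf_max_zero x

lemma cdf_pos {x : ℝ} (hx : x ∈ Ioc (0 : ℝ) 1) : 0 < cdf φ x := by
  rw [← cdf_of_nonpos (φ := φ) le_rfl]
  exact strictMonoOn_cdf hφ hpos ⟨le_rfl, zero_le_one⟩ ⟨hx.1.le, hx.2⟩ hx.1

end Primitive

section Convexity

lemma convexOn_of_isGreatest {E α : Type*} [AddCommGroup E] [Module ℝ E] {s : Set E} {K : Set α}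
    {φ : α → E → ℝ} {m : E → ℝ} (hs : Convex ℝ s) (hφ : ∀ x ∈ K, ConvexOn ℝ s (φ x))
    (hm : ∀ δ ∈ s, IsGreatest ((fun x => φ x δ) '' K) (m δ)) : ConvexOn ℝ s m := by
  refine ⟨hs, fun δ₁ h₁ δ₂ h₂ a b ha hb hab => ?_⟩
  obtain ⟨x, hx, hxm⟩ := (hm _ (hs h₁ h₂ ha hb hab)).1
  rw [← hxm]
  exact ((hφ x hx).2 h₁ h₂ ha hb hab).trans (add_le_add
    (smul_le_smul_of_nonneg_left ((hm δ₁ h₁).2 ⟨x, hx, rfl⟩) ha)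
    (smul_le_smul_of_nonneg_left ((hm δ₂ h₂).2 ⟨x, hx, rfl⟩) hb))

/-- By convexity and `h 0 < c`, `h a ≥ c` at some `a > 0` forces `h > c` on `(a, 1]`. -/
theorem ConvexOn.existsUnique_crossing {h : ℝ → ℝ} {c δ₀ : ℝ} (hconv : ConvexOn ℝ (Icc 0 1) h)
    (h0 : h 0 < c) (hδ₀ : δ₀ ∈ Ioo (0 : ℝ) 1) (hc : c < h δ₀) :
    ∃! d : ℝ, d ∈ Ioo (0 : ℝ) 1 ∧ h d = c ∧ (∀ δ ∈ Ioo d 1, c < h δ) ∧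
      (∀ δ ∈ Ioo (0 : ℝ) d, h δ < c) ∧ d < δ₀ := by
  have hchord : ∀ {s b : ℝ}, 0 ≤ s → s ≤ 1 → b ∈ Icc (0 : ℝ) 1 →
      h (s * b) ≤ (1 - s) * h 0 + s * h b := fun hs0 hs1 hb => by
    simpa using hconv.2 (left_mem_Icc.2 zero_le_one) hb (sub_nonneg.2 hs1) hs0 (by ring)
  have hcross : ∀ a b, 0 < a → a < b → b ≤ 1 → c ≤ h a → c < h b := by
    intro a b ha hab hb hca
    have hb0 : 0 < b := ha.trans hab
    have hs1 : a / b < 1 := (div_lt_one hb0).2 hab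
    have := hchord (div_pos ha hb0).le hs1.le ⟨hb0.le, hb⟩
    rw [div_mul_cancel₀ a hb0.ne'] at this
    nlinarith [div_pos ha hb0]
  obtain ⟨ε, hε, hεc⟩ : ∃ ε ∈ Ioo 0 δ₀, h ε < c := by
    set s := (c - h 0) / (2 * (h δ₀ - h 0))
    have hs0 : 0 < s := div_pos (by linarith) (by linarith)
    have hs1 : s < 1 := by rw [div_lt_one (by linarith)]; linarith
    refine ⟨s * δ₀, ⟨mul_pos hs0 hδ₀.1, mul_lt_of_lt_one_left hδ₀.1 hs1⟩, ?_⟩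
    have hval : (1 - s) * h 0 + s * h δ₀ = (h 0 + c) / 2 := by
      have : h δ₀ - h 0 ≠ 0 := by linarith
      simp only [s]
      field_simp
      ring
    linarith [hchord hs0.le hs1.le (Ioo_subset_Icc_self hδ₀)]
  have hcont : ContinuousOn h (Icc ε δ₀) :=
    (interior_Icc (a := (0 : ℝ)) (b := 1) ▸ hconv.continuousOn_interior).mono
      (Icc_subset_Ioo hε.1 hδ₀.2)
  obtain ⟨d, hd, hdc⟩ := intermediate_value_Ioo hε.2.le hcont ⟨hεc, hc⟩
  have hd01 : d ∈ Ioo (0 : ℝ) 1 := ⟨hε.1.trans hd.1, hd.2.trans hδ₀.2⟩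
  have hbelow : ∀ δ ∈ Ioo 0 d, h δ < c := fun δ hδ =>
    lt_of_not_ge fun hδc => (hcross δ d hδ.1 hδ.2 hd01.2.le hδc).ne' hdc
  refine ⟨d, ⟨hd01, hdc, fun δ hδ => hcross d δ hd01.1 hδ.1 hδ.2.le hdc.ge, hbelow, hd.2⟩, ?_⟩
  rintro d' ⟨hd', -, habove', hbelow', -⟩
  by_contra hne
  rcases lt_or_gt_of_ne hne with hlt | hlt
  · exact (habove' ((d' + d) / 2) ⟨by linarith, by linarith [hd01.2]⟩).not_gt
      (hbelow _ ⟨by linarith [hd'.1], by linarith⟩)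
  · exact (hcross d ((d + d') / 2) hd01.1 (by linarith) (by linarith [hd'.2]) hdc.ge).not_gt
      (hbelow' _ ⟨by linarith [hd01.1], by linarith⟩)

end Convexity

section CostPrimitive

variable {g : ℝ → ℝ}

lemma calG_eq_cdf_cdf : calG g = cdf (cdf g) := rfl

lemma cdf_sub_cdf_le_mul (hg : ContinuousOn g (Icc 0 1)) {M : ℝ}
    (hM : ∀ t ∈ Icc (0 : ℝ) 1, g t ≤ M) (hM0 : 0 ≤ M) {a b : ℝ} (hab : a ≤ b) (hb : b ≤ 1) :
    cdf g b - cdf g a ≤ M * (b - a) := by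
  have ha' : max a 0 ∈ Icc (0 : ℝ) 1 := ⟨le_max_right a 0, max_le (hab.trans hb) zero_le_one⟩
  have hb' : max b 0 ∈ Icc (0 : ℝ) 1 := ⟨le_max_right b 0, max_le hb zero_le_one⟩
  have hab' : max a 0 ≤ max b 0 := max_le_max_right 0 hab
  rw [← cdf_max_zero a, ← cdf_max_zero b, cdf_sub_cdf hg ha' hb']
  calc ∫ t in max a 0..max b 0, g t ≤ ∫ _ in max a 0..max b 0, M :=
        integral_mono_on hab' (hg.mono (uIcc_subset_Icc ha' hb')).intervalIntegrable
          intervalIntegrable_const fun t ht => hM t ⟨ha'.1.trans ht.1, ht.2.trans hb'.2⟩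
    _ = M * (max b 0 - max a 0) := by rw [intervalIntegral.integral_const, smul_eq_mul, mul_comm]
    _ ≤ M * (b - a) := by
        refine mul_le_mul_of_nonneg_left ?_ hM0
        rcases max_cases a 0 with ⟨ha0, _⟩ | ⟨ha0, _⟩ <;>
          rcases max_cases b 0 with ⟨hb0, _⟩ | ⟨hb0, _⟩ <;> linarith

lemma calG_one (hg : ContinuousOn g (Icc 0 1)) : calG g 1 = cdf g 1 - muG g := by
  have hG : ContinuousOn (cdf g) (Icc 0 1) := (continuousOn_cdf hg).mono Icc_subset_Iic_self
  have hparts : ∫ t in (0 : ℝ)..1, (cdf g t + t * g t) = 1 * cdf g 1 - 0 * cdf g 0 :=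
    integral_eq_sub_of_hasDerivAt_of_le zero_le_one (continuousOn_id.mul hG)
      (fun t ht => by simpa using (hasDerivAt_id t).mul (hasDerivAt_cdf hg ht))
      ((hG.add (continuousOn_id.mul hg)).intervalIntegrable_of_Icc zero_le_one)
  rw [integral_add (f := cdf g) (g := fun t => t * g t)
    (hG.intervalIntegrable_of_Icc zero_le_one)
    ((continuousOn_id.mul hg).intervalIntegrable_of_Icc zero_le_one)] at hparts
  rw [calG_eq_cdf_cdf, cdf_eq_integral zero_le_one, muG, ← integral_of_le zero_le_one]
  linarith

lemma continuousOn_calG (hg : ContinuousOn g (Icc 0 1)) : ContinuousOn (calG g) (Iic 1) :=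
  continuousOn_cdf ((continuousOn_cdf hg).mono Icc_subset_Iic_self)

variable (hg : ContinuousOn g (Icc 0 1)) (hgpos : ∀ t ∈ Ioo (0 : ℝ) 1, 0 < g t)
include hg hgpos

lemma monotoneOn_calG : MonotoneOn (calG g) (Iic 1) :=
  monotoneOn_cdf ((continuousOn_cdf hg).mono Icc_subset_Iic_self)
    fun _ ht => cdf_pos hg hgpos ⟨ht.1, ht.2.le⟩

lemma calG_nonneg {y : ℝ} (hy : y ≤ 1) : 0 ≤ calG g y :=
  cdf_nonneg ((continuousOn_cdf hg).mono Icc_subset_Iic_self)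
    (fun _ ht => cdf_pos hg hgpos ⟨ht.1, ht.2.le⟩) hy

lemma calG_pos {y : ℝ} (hy : y ∈ Ioc (0 : ℝ) 1) : 0 < calG g y :=
  cdf_pos ((continuousOn_cdf hg).mono Icc_subset_Iic_self)
    (fun _ ht => cdf_pos hg hgpos ⟨ht.1, ht.2.le⟩) hy

lemma calG_sub_mem_Ioo {a b : ℝ} (ha : 0 ≤ a) (hab : a < b) (hb : b ≤ 1) :
    cdf g a * (b - a) < calG g b - calG g a ∧ calG g b - calG g a < cdf g b * (b - a) := by
  have haI : a ∈ Icc (0 : ℝ) 1 := ⟨ha, hab.le.trans hb⟩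
  have hbI : b ∈ Icc (0 : ℝ) 1 := ⟨ha.trans hab.le, hb⟩
  have hG : ContinuousOn (cdf g) (Icc a b) :=
    (continuousOn_cdf hg).mono fun t ht => ht.2.trans hb
  have hmono : ∀ t ∈ Icc a b, cdf g a ≤ cdf g t ∧ cdf g t ≤ cdf g b := fun t ht =>
    ⟨(strictMonoOn_cdf hg hgpos).monotoneOn haI ⟨ha.trans ht.1, ht.2.trans hb⟩ ht.1,
      (strictMonoOn_cdf hg hgpos).monotoneOn ⟨ha.trans ht.1, ht.2.trans hb⟩ hbI ht.2⟩
  have hlt : cdf g a < cdf g b := strictMonoOn_cdf hg hgpos haI hbI hab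
  have hconst : ∀ c : ℝ, ∫ _ in a..b, c = c * (b - a) := fun c => by
    rw [intervalIntegral.integral_const, smul_eq_mul, mul_comm]
  rw [calG_eq_cdf_cdf, cdf_sub_cdf ((continuousOn_cdf hg).mono Icc_subset_Iic_self) haI hbI,
    ← hconst, ← hconst]
  exact ⟨integral_lt_integral_of_continuousOn_of_le_of_exists_lt hab continuousOn_const hG
      (fun t ht => (hmono t (Ioc_subset_Icc_self ht)).1) ⟨b, right_mem_Icc.2 hab.le, hlt⟩,
    integral_lt_integral_of_continuousOn_of_le_of_exists_lt hab hG continuousOn_const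
      (fun t ht => (hmono t (Ioc_subset_Icc_self ht)).2) ⟨a, left_mem_Icc.2 hab.le, hlt⟩⟩

lemma calG_add_mul_sub_le {a y : ℝ} (ha : a ≤ 1) (hy : y ≤ 1) :
    calG g a + cdf g a * (y - a) ≤ calG g y := by
  rcases le_or_gt a 0 with ha0 | ha0
  · rw [calG_eq_cdf_cdf, cdf_of_nonpos ha0, cdf_of_nonpos ha0, ← calG_eq_cdf_cdf]
    simpa using calG_nonneg hg hgpos hy
  rcases lt_trichotomy a y with hay | rfl | hya
  · linarith [(calG_sub_mem_Ioo hg hgpos ha0.le hay hy).1]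
  · simp
  · have hy' : max y 0 < a := max_lt hya ha0
    have hbound := (calG_sub_mem_Ioo hg hgpos (le_max_right y 0) hy' ha).2
    have hGa : 0 ≤ cdf g a := cdf_nonneg hg hgpos ha
    rw [calG_eq_cdf_cdf, ← cdf_max_zero y, ← calG_eq_cdf_cdf]
    nlinarith [le_max_left y 0]

lemma calG_mul_sub_le {M : ℝ} (hM : ∀ t ∈ Icc (0 : ℝ) 1, g t ≤ M) (hM0 : 0 ≤ M) {a d w : ℝ}
    (hd : 0 ≤ d) (had : a + d ≤ 1) (hw : 0 ≤ w) :
    calG g a * w - M * d * (d * w) ≤ calG g (a + d) * w - d * w * cdf g (a + d) := by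
  have htangent := calG_add_mul_sub_le hg hgpos (a := a) (by linarith) had
  have hlip := cdf_sub_cdf_le_mul hg hM hM0 (le_add_of_nonneg_right hd) had
  rw [add_sub_cancel_left] at htangent hlip
  nlinarith [mul_le_mul_of_nonneg_right htangent hw, mul_le_mul_of_nonneg_left hlip
    (mul_nonneg hd hw)]

lemma sub_muG_lt_calG (hg1 : cdf g 1 = 1) {x : ℝ} (hx : x ∈ Ico (0 : ℝ) 1) :
    x - muG g < calG g x := by
  have h := (calG_sub_mem_Ioo hg hgpos hx.1 hx.2 le_rfl).2
  rw [calG_one hg, hg1] at h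
  linarith

end CostPrimitive

section VirtualValuation

variable {f : ℝ → ℝ}

lemma psiT_eq_psi_add (x θ : ℝ) : psiT f x θ = psi f θ + (1 - cdf f x) / f θ := by
  unfold psiT psi
  ring

lemma psiT_one (hf1 : cdf f 1 = 1) : psiT f 1 = psi f := by
  funext θ
  rw [psiT, psi, hf1]

lemma psi_one (hf1 : cdf f 1 = 1) : psi f 1 = 1 := by
  simp [psi, hf1]

variable (hf : ContinuousOn f (Icc 0 1)) (hfpos : ∀ t ∈ Icc (0 : ℝ) 1, 0 < f t)
include hf hfpos

lemma continuousOn_psiT (x : ℝ) : ContinuousOn (psiT f x) (Icc 0 1) :=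
  continuousOn_id.sub (continuousOn_const.sub ((continuousOn_cdf hf).mono Icc_subset_Iic_self)
    |>.div hf fun t ht => (hfpos t ht).ne')

lemma psiT_le_self {x θ : ℝ} (hx : x ≤ 1) (hθ : θ ∈ Icc (0 : ℝ) 1) (hθx : θ ≤ x) :
    psiT f x θ ≤ θ := by
  have hF : cdf f θ ≤ cdf f x :=
    (strictMonoOn_cdf hf fun t ht => hfpos t (Ioo_subset_Icc_self ht)).monotoneOn
      hθ ⟨hθ.1.trans hθx, hx⟩ hθx
  have : 0 ≤ (cdf f x - cdf f θ) / f θ := div_nonneg (sub_nonneg.2 hF) (hfpos θ hθ).le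
  rw [psiT]
  linarith

variable (hf1 : cdf f 1 = 1)
include hf1

lemma cdf_le_one {x : ℝ} (hx : x ≤ 1) : cdf f x ≤ 1 :=
  hf1 ▸ monotoneOn_cdf hf (fun t ht => hfpos t (Ioo_subset_Icc_self ht)) hx (mem_Iic.2 le_rfl) hx

lemma one_sub_cdf_pos {x : ℝ} (hx : x ∈ Ico (0 : ℝ) 1) : 0 < 1 - cdf f x :=
  sub_pos.2 <| hf1 ▸ strictMonoOn_cdf hf (fun t ht => hfpos t (Ioo_subset_Icc_self ht))
    (Ico_subset_Icc_self hx) (right_mem_Icc.2 zero_le_one) hx.2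

lemma continuousOn_psi : ContinuousOn (psi f) (Icc 0 1) :=
  psiT_one hf1 ▸ continuousOn_psiT hf hfpos 1

lemma psi_le_self {θ : ℝ} (hθ : θ ∈ Icc (0 : ℝ) 1) : psi f θ ≤ θ :=
  psiT_one hf1 ▸ psiT_le_self hf hfpos le_rfl hθ hθ.2

/-- Myerson's identity: `θ ↦ θ (F(θ) − 1)` is a primitive of `ψ f`. -/
lemma integral_psi_mul {p : ℝ} (hp : p ∈ Icc (0 : ℝ) 1) :
    ∫ θ in p..1, psi f θ * f θ = p * (1 - cdf f p) := by
  have hF : ContinuousOn (cdf f) (Icc 0 1) := (continuousOn_cdf hf).mono Icc_subset_Iic_self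
  have hsub : Icc p 1 ⊆ Icc 0 1 := Icc_subset_Icc_left hp.1
  have hprim : ∫ θ in p..1, (cdf f θ - 1 + θ * f θ) = 1 * (cdf f 1 - 1) - p * (cdf f p - 1) :=
    integral_eq_sub_of_hasDerivAt_of_le (f := fun θ => θ * (cdf f θ - 1)) hp.2
      (continuousOn_id.mul (hF.sub continuousOn_const) |>.mono hsub)
      (fun θ hθ => by
        refine ((hasDerivAt_id' θ).fun_mul
          ((hasDerivAt_cdf hf ⟨hp.1.trans_lt hθ.1, hθ.2⟩).sub_const 1)).congr_deriv ?_
        ring)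
      ((hF.sub continuousOn_const).add (continuousOn_id.mul hf) |>.mono hsub
        |>.intervalIntegrable_of_Icc hp.2)
  rw [hf1] at hprim
  rw [← integral_congr fun θ hθ => ?_, hprim]
  · ring
  · rw [uIcc_of_le hp.2] at hθ
    have := (hfpos θ (hsub hθ)).ne'
    simp only [psi]
    field_simp
    ring

end VirtualValuation

lemma PiD_eq_of_ne_zero {f g θss : ℝ → ℝ} {x : ℝ} (hx : x ≠ 0) (δ : ℝ)
    (hC : IntervalIntegrable (fun θ => cdf g (psiT f x θ)) volume (θss x) x)
    (hD : IntervalIntegrable (fun θ => calG g (psiT f x θ) * f θ) volume (θss x) x) :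
    PiD f g θss x δ = (1 - cdf f x) * (x - muG g) + δ * ∫ θ in θss x..x,
      (calG g (psiT f x θ) * f θ - (1 - cdf f x) * cdf g (psiT f x θ)) := by
  rw [PiD, if_neg hx, integral_sub hD (hC.const_mul _), intervalIntegral.integral_const_mul]
  ring

lemma PiD_zero_eq (f g θss : ℝ → ℝ) (x : ℝ) :
    PiD f g θss x 0 = (1 - cdf f x) * (x - muG g) := by
  by_cases hx : x = 0
  · simp [PiD, hx, cdf_of_nonpos]
  · simp [PiD, hx]

lemma convexOn_PiD (f g θss : ℝ → ℝ) (x : ℝ) {s : Set ℝ} (hs : Convex ℝ s) :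
    ConvexOn ℝ s (PiD f g θss x) := by
  refine ⟨hs, fun δ₁ _ δ₂ _ a b _ _ hab => le_of_eq ?_⟩
  simp only [PiD, smul_eq_mul]
  split_ifs
  · linear_combination muG g * hab
  · linear_combination (-((1 - cdf f x) * (x - muG g))) * hab

/-- Below `θ*` the virtual valuation is negative, where `𝒢` vanishes. -/
lemma integral_zero_calG_psi_mul {f g : ℝ → ℝ} {θs : ℝ} (hψ : StrictMonoOn (psi f) (Icc 0 1))
    (hθs : θs ∈ Icc (0 : ℝ) 1) (hθs0 : psi f θs = 0) {b : ℝ} (hb : b ∈ Icc 0 θs) :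
    ∫ θ in (0 : ℝ)..b, calG g (psi f θ) * f θ = 0 := by
  refine (integral_congr (g := fun _ => 0) fun θ hθ => ?_).trans intervalIntegral.integral_zero
  rw [uIcc_of_le hb.1] at hθ
  have hneg : psi f θ ≤ 0 :=
    hθs0 ▸ hψ.monotoneOn ⟨hθ.1, hθ.2.trans (hb.2.trans hθs.2)⟩ hθs (hθ.2.trans hb.2)
  simp [calG_eq_cdf_cdf, cdf_of_nonpos hneg]

lemma PiD_zero_lt {f g : ℝ → ℝ} (hf : ContinuousOn f (Icc 0 1))
    (hfpos : ∀ t ∈ Icc (0 : ℝ) 1, 0 < f t) (hf1 : cdf f 1 = 1) (hg : ContinuousOn g (Icc 0 1))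
    (hgpos : ∀ t ∈ Ioo (0 : ℝ) 1, 0 < g t) (hg1 : cdf g 1 = 1) (θss : ℝ → ℝ) {E : ℝ}
    (hE : ∀ p ∈ Icc (0 : ℝ) 1, (1 - cdf f p) * calG g p ≤ E) (hE0 : 0 < E) {x : ℝ}
    (hx : x ∈ Icc (0 : ℝ) 1) : PiD f g θss x 0 < E := by
  rw [PiD_zero_eq]
  rcases hx.2.lt_or_eq with hx1 | rfl
  · exact (mul_lt_mul_of_pos_left (sub_muG_lt_calG hg hgpos hg1 ⟨hx.1, hx1⟩)
      (one_sub_cdf_pos hf hfpos hf1 ⟨hx.1, hx1⟩)).trans_le (hE x hx)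
  · simpa [hf1] using hE0

section Model

variable {f g : ℝ → ℝ}

lemma psiT_mem_Iic (hf : ContinuousOn f (Icc 0 1)) (hfpos : ∀ t ∈ Icc (0 : ℝ) 1, 0 < f t)
    {x : ℝ} (hx : x ≤ 1) : MapsTo (psiT f x) (Icc 0 x) (Iic 1) := fun _ hθ =>
  (psiT_le_self hf hfpos hx ⟨hθ.1, hθ.2.trans hx⟩ hθ.2).trans (hθ.2.trans hx)

lemma continuousOn_cdf_psiT (hf : ContinuousOn f (Icc 0 1))
    (hfpos : ∀ t ∈ Icc (0 : ℝ) 1, 0 < f t) (hg : ContinuousOn g (Icc 0 1)) {x : ℝ} (hx : x ≤ 1) :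
    ContinuousOn (fun θ => cdf g (psiT f x θ)) (Icc 0 x) :=
  (continuousOn_cdf hg).comp ((continuousOn_psiT hf hfpos x).mono (Icc_subset_Icc_right hx))
    (psiT_mem_Iic hf hfpos hx)

lemma continuousOn_calG_psiT_mul (hf : ContinuousOn f (Icc 0 1))
    (hfpos : ∀ t ∈ Icc (0 : ℝ) 1, 0 < f t) (hg : ContinuousOn g (Icc 0 1)) {x : ℝ} (hx : x ≤ 1) :
    ContinuousOn (fun θ => calG g (psiT f x θ) * f θ) (Icc 0 x) :=
  ((continuousOn_calG hg).comp ((continuousOn_psiT hf hfpos x).mono (Icc_subset_Icc_right hx))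
    (psiT_mem_Iic hf hfpos hx)).mul (hf.mono (Icc_subset_Icc_right hx))

lemma continuousOn_calG_psi_mul (hf : ContinuousOn f (Icc 0 1))
    (hfpos : ∀ t ∈ Icc (0 : ℝ) 1, 0 < f t) (hf1 : cdf f 1 = 1) (hg : ContinuousOn g (Icc 0 1)) :
    ContinuousOn (fun θ => calG g (psi f θ) * f θ) (Icc 0 1) :=
  psiT_one hf1 ▸ continuousOn_calG_psiT_mul hf hfpos hg le_rfl

/-- Truncation raises `ψ` by `(1 − F x)/f`; the convexity of `𝒢` and the Lipschitz bound on
`G` control the effect on the integrand of `Π^D`. -/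
lemma integral_calG_psi_mul_sub_le (hf : ContinuousOn f (Icc 0 1))
    (hfpos : ∀ t ∈ Icc (0 : ℝ) 1, 0 < f t) (hf1 : cdf f 1 = 1) (hg : ContinuousOn g (Icc 0 1))
    (hgpos : ∀ t ∈ Ioo (0 : ℝ) 1, 0 < g t) {M m : ℝ} (hM : ∀ t ∈ Icc (0 : ℝ) 1, g t ≤ M)
    (hM0 : 0 ≤ M) (hm : ∀ t ∈ Icc (0 : ℝ) 1, m ≤ f t) (hm0 : 0 < m) {t x : ℝ}
    (ht : t ∈ Icc 0 x) (hx : x ≤ 1) :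
    (∫ θ in t..x, calG g (psi f θ) * f θ) - M * (1 - cdf f x) ^ 2 / m ≤
      ∫ θ in t..x, (calG g (psiT f x θ) * f θ - (1 - cdf f x) * cdf g (psiT f x θ)) := by
  set B := 1 - cdf f x
  have hsub : Icc t x ⊆ Icc 0 x := Icc_subset_Icc_left ht.1
  have hB : 0 ≤ B := sub_nonneg.2 (cdf_le_one hf hfpos hf1 hx)
  have hK : 0 ≤ M * B ^ 2 / m := by positivity
  have hpsi := (continuousOn_calG_psi_mul hf hfpos hf1 hg).mono
    (hsub.trans (Icc_subset_Icc_right hx))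
  calc (∫ θ in t..x, calG g (psi f θ) * f θ) - M * B ^ 2 / m
      ≤ (∫ θ in t..x, calG g (psi f θ) * f θ) - (x - t) * (M * B ^ 2 / m) := by
        linarith [mul_le_mul_of_nonneg_right (show x - t ≤ 1 by linarith [ht.1]) hK]
    _ = ∫ θ in t..x, (calG g (psi f θ) * f θ - M * B ^ 2 / m) := by
        rw [integral_sub (hpsi.intervalIntegrable_of_Icc ht.2) intervalIntegrable_const,
          intervalIntegral.integral_const, smul_eq_mul]
    _ ≤ _ := by
        refine integral_mono_on ht.2
          ((hpsi.sub continuousOn_const).intervalIntegrable_of_Icc ht.2)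
          (((continuousOn_calG_psiT_mul hf hfpos hg hx).sub (continuousOn_const.mul
            (continuousOn_cdf_psiT hf hfpos hg hx))).mono hsub |>.intervalIntegrable_of_Icc ht.2)
          fun θ hθ => ?_
        have hθI : θ ∈ Icc (0 : ℝ) 1 := ⟨ht.1.trans hθ.1, hθ.2.trans hx⟩
        have hfθ := hfpos θ hθI
        have key := calG_mul_sub_le hg hgpos hM hM0 (a := psi f θ) (div_nonneg hB hfθ.le)
          (psiT_eq_psi_add x θ ▸ psiT_mem_Iic hf hfpos hx (hsub hθ)) hfθ.le
        rw [← psiT_eq_psi_add, div_mul_cancel₀ B hfθ.ne'] at key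
        have hdiv : M * (B / f θ) * B ≤ M * B ^ 2 / m := by
          rw [show M * (B / f θ) * B = M * B ^ 2 / f θ by ring]
          exact div_le_div_of_nonneg_left (by positivity) hm0 (hm θ hθI)
        linarith

variable (hf : ContinuousOn f (Icc 0 1)) (hfpos : ∀ t ∈ Icc (0 : ℝ) 1, 0 < f t)
  (hf1 : cdf f 1 = 1) (hg : ContinuousOn g (Icc 0 1)) {θs : ℝ}
  (hψ : StrictMonoOn (psi f) (Icc 0 1)) (hθs : θs ∈ Icc (0 : ℝ) 1) (hθs0 : psi f θs = 0)
include hf hfpos hf1 hg hψ hθs hθs0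

lemma integral_zero_one_calG_psi_mul :
    ∫ θ in (0 : ℝ)..1, calG g (psi f θ) * f θ = ∫ θ in θs..1, calG g (psi f θ) * f θ := by
  have hc := continuousOn_calG_psi_mul hf hfpos hf1 hg
  rw [← integral_interval_sub_left (hc.intervalIntegrable_of_Icc zero_le_one)
    ((hc.mono (Icc_subset_Icc_right hθs.2)).intervalIntegrable_of_Icc hθs.1),
    integral_zero_calG_psi_mul hψ hθs hθs0 ⟨hθs.1, le_rfl⟩, sub_zero]

variable (hgpos : ∀ t ∈ Ioo (0 : ℝ) 1, 0 < g t)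
include hgpos

lemma mul_calG_lt_integral {p : ℝ} (hp : p ∈ Ico (0 : ℝ) 1) :
    (1 - cdf f p) * calG g p < ∫ θ in θs..1, calG g (psi f θ) * f θ := by
  have hpI : p ∈ Icc (0 : ℝ) 1 := Ico_subset_Icc_self hp
  have hsub : Icc p 1 ⊆ Icc 0 1 := Icc_subset_Icc_left hp.1
  have hψ1 : ∀ θ ∈ Icc (0 : ℝ) 1, psi f θ ≤ 1 := fun θ hθ =>
    (psi_le_self hf hfpos hf1 hθ).trans hθ.2
  have hc := continuousOn_calG_psi_mul hf hfpos hf1 hg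
  have htangent_c :
      ContinuousOn (fun θ => (calG g p + cdf g p * (psi f θ - p)) * f θ) (Icc p 1) :=
    ((continuousOn_const.add (continuousOn_const.mul ((continuousOn_psi hf hfpos hf1).sub
      continuousOn_const))).mul hf).mono hsub
  have htangent : ∫ θ in p..1, (calG g p + cdf g p * (psi f θ - p)) * f θ
      = (1 - cdf f p) * calG g p := by
    have hsplit : ∀ θ, (calG g p + cdf g p * (psi f θ - p)) * f θ
        = (calG g p - cdf g p * p) * f θ + cdf g p * (psi f θ * f θ) := fun θ => by ring
    simp_rw [hsplit]
    rw [integral_add (f := fun θ => (calG g p - cdf g p * p) * f θ)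
      (g := fun θ => cdf g p * (psi f θ * f θ))
      ((hf.mono hsub).intervalIntegrable_of_Icc hp.2.le |>.const_mul _)
      (((continuousOn_psi hf hfpos hf1).mul hf).mono hsub |>.intervalIntegrable_of_Icc hp.2.le
        |>.const_mul _), intervalIntegral.integral_const_mul, intervalIntegral.integral_const_mul,
      integral_psi_mul hf hfpos hf1 hpI, ← cdf_sub_cdf hf hpI ⟨zero_le_one, le_rfl⟩, hf1]
    ring
  calc (1 - cdf f p) * calG g p
      = ∫ θ in p..1, (calG g p + cdf g p * (psi f θ - p)) * f θ := htangent.symm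
    _ < ∫ θ in p..1, calG g (psi f θ) * f θ := by
        refine integral_lt_integral_of_continuousOn_of_le_of_exists_lt hp.2 htangent_c
          (hc.mono hsub) (fun θ hθ => ?_) ⟨1, right_mem_Icc.2 hp.2.le, ?_⟩
        · have hθI : θ ∈ Icc (0 : ℝ) 1 := hsub (Ioc_subset_Icc_self hθ)
          exact mul_le_mul_of_nonneg_right (calG_add_mul_sub_le hg hgpos hp.2.le (hψ1 θ hθI))
            (hfpos θ hθI).le
        · rw [psi_one hf1]
          refine mul_lt_mul_of_pos_right ?_ (hfpos 1 ⟨zero_le_one, le_rfl⟩)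
          linarith [(calG_sub_mem_Ioo hg hgpos hp.1 hp.2 le_rfl).1]
    _ ≤ ∫ θ in (0 : ℝ)..1, calG g (psi f θ) * f θ :=
        integral_mono_interval hp.1 hp.2.le le_rfl
          ((ae_restrict_mem measurableSet_Ioc).mono fun θ hθ =>
            mul_nonneg (calG_nonneg hg hgpos (hψ1 θ (Ioc_subset_Icc_self hθ)))
              (hfpos θ (Ioc_subset_Icc_self hθ)).le)
          (hc.intervalIntegrable_of_Icc zero_le_one)
    _ = ∫ θ in θs..1, calG g (psi f θ) * f θ :=
        integral_zero_one_calG_psi_mul hf hfpos hf1 hg hψ hθs hθs0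

lemma mem_Ioo_integral_of_isGreatest {E : ℝ}
    (hE : IsGreatest ((fun p => (1 - cdf f p) * calG g p) '' Icc (0 : ℝ) 1) E) :
    E ∈ Ioo 0 (∫ θ in θs..1, calG g (psi f θ) * f θ) := by
  obtain ⟨⟨p, hp, rfl⟩, hub⟩ := hE
  have hhalf : (2⁻¹ : ℝ) ∈ Ioo 0 1 := ⟨by norm_num, by norm_num⟩
  refine ⟨(mul_pos (one_sub_cdf_pos hf hfpos hf1 (Ioo_subset_Ico_self hhalf))
    (calG_pos hg hgpos (Ioo_subset_Ioc_self hhalf))).trans_le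
      (hub ⟨2⁻¹, Ioo_subset_Icc_self hhalf, rfl⟩), ?_⟩
  rcases hp.2.lt_or_eq with hp1 | rfl
  · exact mul_calG_lt_integral hf hfpos hf1 hg hψ hθs hθs0 hgpos ⟨hp.1, hp1⟩
  · simpa [hf1, calG_eq_cdf_cdf, cdf_of_nonpos] using
      mul_calG_lt_integral hf hfpos hf1 hg hψ hθs hθs0 hgpos (left_mem_Ico.2 one_pos)

lemma integral_calG_psi_mul_ge {t x : ℝ} (ht : t ∈ Icc 0 θs) (hx : x ∈ Icc (0 : ℝ) 1) :
    (∫ θ in θs..1, calG g (psi f θ) * f θ) - calG g 1 * (1 - cdf f x) ≤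
      ∫ θ in t..x, calG g (psi f θ) * f θ := by
  have hc := continuousOn_calG_psi_mul hf hfpos hf1 hg
  have hint : ∀ {b}, b ∈ Icc (0 : ℝ) 1 →
      IntervalIntegrable (fun θ => calG g (psi f θ) * f θ) volume 0 b := fun hb =>
    (hc.mono (Icc_subset_Icc_right hb.2)).intervalIntegrable_of_Icc hb.1
  have htail : ∫ θ in x..1, calG g (psi f θ) * f θ ≤ calG g 1 * (1 - cdf f x) :=
    calc ∫ θ in x..1, calG g (psi f θ) * f θ ≤ ∫ θ in x..1, calG g 1 * f θ := by
          refine integral_mono_on hx.2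
            ((hc.mono (Icc_subset_Icc_left hx.1)).intervalIntegrable_of_Icc hx.2)
            ((continuousOn_const.mul hf).mono (Icc_subset_Icc_left hx.1)
              |>.intervalIntegrable_of_Icc hx.2) fun θ hθ => ?_
          have hθI : θ ∈ Icc (0 : ℝ) 1 := Icc_subset_Icc_left hx.1 hθ
          exact mul_le_mul_of_nonneg_right (monotoneOn_calG hg hgpos
            ((psi_le_self hf hfpos hf1 hθI).trans hθI.2) (mem_Iic.2 le_rfl)
            ((psi_le_self hf hfpos hf1 hθI).trans hθI.2)) (hfpos θ hθI).le
      _ = calG g 1 * (1 - cdf f x) := by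
          rw [intervalIntegral.integral_const_mul,
            ← cdf_sub_cdf hf hx (right_mem_Icc.2 zero_le_one), hf1]
  have hhead := integral_interval_sub_left (hint hx) (hint ⟨ht.1, ht.2.trans hθs.2⟩)
  have htail' := integral_interval_sub_left (hint (right_mem_Icc.2 zero_le_one)) (hint hx)
  have hzero := integral_zero_calG_psi_mul (g := g) hψ hθs hθs0 ht
  have hA := integral_zero_one_calG_psi_mul hf hfpos hf1 hg hψ hθs hθs0
  linarith

lemma le_PiD {θss : ℝ → ℝ} {x δ M m : ℝ} (hx : x ∈ Ioo (0 : ℝ) 1) (ht : θss x ∈ Ioo 0 x)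
    (ht0 : psiT f x (θss x) = 0) (hδ : 0 ≤ δ) (hM : ∀ t ∈ Icc (0 : ℝ) 1, g t ≤ M) (hM0 : 0 ≤ M)
    (hm : ∀ t ∈ Icc (0 : ℝ) 1, m ≤ f t) (hm0 : 0 < m) :
    δ * (∫ θ in θs..1, calG g (psi f θ) * f θ) +
      (1 - cdf f x) * (x - muG g - δ * calG g 1 - δ * M * (1 - cdf f x) / m) ≤
      PiD f g θss x δ := by
  set t := θss x
  set B := 1 - cdf f x
  have htI : t ∈ Icc (0 : ℝ) 1 := ⟨ht.1.le, ht.2.le.trans hx.2.le⟩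
  have htx : Icc t x ⊆ Icc 0 x := Icc_subset_Icc_left ht.1.le
  have htθs : t ≤ θs := by
    refine (hψ.le_iff_le htI hθs).1 ?_
    have hshift := psiT_eq_psi_add (f := f) x t
    have : 0 ≤ B / f t :=
      div_nonneg (sub_nonneg.2 (cdf_le_one hf hfpos hf1 hx.2.le)) (hfpos t htI).le
    rw [ht0] at hshift
    linarith
  have hlow := integral_calG_psi_mul_sub_le hf hfpos hf1 hg hgpos hM hM0 hm hm0
    ⟨ht.1.le, ht.2.le⟩ hx.2.le
  have hA := integral_calG_psi_mul_ge hf hfpos hf1 hg hψ hθs hθs0 hgpos ⟨ht.1.le, htθs⟩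
    (Ioo_subset_Icc_self hx)
  rw [PiD_eq_of_ne_zero hx.1.ne' δ
    ((continuousOn_cdf_psiT hf hfpos hg hx.2.le).mono htx |>.intervalIntegrable_of_Icc ht.2.le)
    ((continuousOn_calG_psiT_mul hf hfpos hg hx.2.le).mono htx
      |>.intervalIntegrable_of_Icc ht.2.le)]
  calc _ = B * (x - muG g) + δ * ((∫ θ in θs..1, calG g (psi f θ) * f θ) - calG g 1 * B
        - M * B ^ 2 / m) := by ring
    _ ≤ _ := by gcongr; linarith

variable (hg1 : cdf g 1 = 1)
include hg1

lemma exists_PiD_gt {θss : ℝ → ℝ}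
    (hθss : ∀ x ∈ Ioc (0 : ℝ) 1, θss x ∈ Ioo 0 x ∧ psiT f x (θss x) = 0) {δ : ℝ}
    (hδ : δ ∈ Ico (0 : ℝ) 1) :
    ∃ x ∈ Icc (0 : ℝ) 1, δ * (∫ θ in θs..1, calG g (psi f θ) * f θ) < PiD f g θss x δ := by
  obtain ⟨M, hM⟩ := isCompact_Icc.exists_bound_of_continuousOn hg
  have hM0 : 0 ≤ M := (norm_nonneg _).trans (hM 0 (left_mem_Icc.2 zero_le_one))
  obtain ⟨t₀, ht₀, hmin⟩ := isCompact_Icc.exists_isMinOn (nonempty_Icc.2 zero_le_one) hf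
  set bracket := fun x => x - muG g - δ * calG g 1 - δ * M * (1 - cdf f x) / f t₀
  have hlim : Tendsto bracket (𝓝[<] 1) (𝓝 (bracket 1)) := by
    have hF : ContinuousWithinAt (cdf f) (Iio 1) 1 :=
      ((continuousOn_cdf hf).continuousWithinAt (mem_Iic.2 le_rfl)).mono Iio_subset_Iic_self
    exact (((continuousWithinAt_id.sub continuousWithinAt_const).sub continuousWithinAt_const).sub
      ((continuousWithinAt_const.mul (continuousWithinAt_const.sub hF)).div_const _)).tendsto
  have hlim_pos : 0 < bracket 1 := by
    have hμ : 0 < 1 - muG g := by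
      simpa [calG_one hg, hg1] using calG_pos hg hgpos ⟨one_pos, le_rfl⟩
    simp only [bracket, hf1, calG_one hg, hg1, sub_self, mul_zero, zero_div, sub_zero]
    nlinarith [mul_pos (sub_pos.2 hδ.2) hμ]
  obtain ⟨x, hbracket, hx⟩ :=
    ((hlim.eventually_const_lt hlim_pos).and (Ioo_mem_nhdsLT one_pos)).exists
  refine ⟨x, Ioo_subset_Icc_self hx, lt_of_lt_of_le ?_ (le_PiD hf hfpos hf1 hg hψ hθs hθs0 hgpos
    hx (hθss x ⟨hx.1, hx.2.le⟩).1 (hθss x ⟨hx.1, hx.2.le⟩).2 hδ.1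
    (fun t ht => (Real.le_norm_self _).trans (hM t ht)) hM0 (fun t ht => hmin ht) (hfpos t₀ ht₀))⟩
  exact lt_add_of_pos_right _
    (mul_pos (one_sub_cdf_pos hf hfpos hf1 (Ioo_subset_Ico_self hx)) hbracket)

end Model

theorem stmt0_general
    (f g : ℝ → ℝ)
    (hf_one : cdf f 1 = 1)
    (hg_one : cdf g 1 = 1)
    (hg_cont : ContinuousOn g (Set.Icc 0 1))
    (hg_pos : ∀ t ∈ Set.Icc (0:ℝ) 1, 0 < g t)
    (hf_pos : ∀ t ∈ Set.Icc (0:ℝ) 1, 0 < f t)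
    (fd : ℝ → ℝ)
    (hf_deriv : ∀ t ∈ Set.Icc (0:ℝ) 1, HasDerivWithinAt f (fd t) (Set.Icc 0 1) t)
    (hpsi_mono : StrictMonoOn (psi f) (Set.Icc 0 1))
    (θs : ℝ) (hθs : θs ∈ Set.Ioo (0:ℝ) 1) (hθs0 : psi f θs = 0)
    (θss : ℝ → ℝ)
    (hθss : ∀ x ∈ Set.Ioc (0:ℝ) 1, θss x ∈ Set.Ioo 0 x ∧ psiT f x (θss x) = 0)
    (piD : ℝ → ℝ)
    (hpiD : ∀ δ ∈ Set.Icc (0:ℝ) 1,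
      IsGreatest ((fun x => PiD f g θss x δ) '' Set.Icc (0:ℝ) 1) (piD δ))
    (piEAO : ℝ)
    (hEAO : IsGreatest ((fun p => (1 - cdf f p) * calG g p) '' Set.Icc (0:ℝ) 1) piEAO) :
    ∃! d : ℝ, d ∈ Set.Ioo (0:ℝ) 1 ∧ piD d = piEAO ∧
      (∀ δ ∈ Set.Ioo d 1, piEAO < piD δ) ∧
      (∀ δ ∈ Set.Ioo (0:ℝ) d, piD δ < piEAO) ∧
      d < piEAO / (∫ θ in θs..1, calG g (psi f θ) * f θ) := by
  have hf : ContinuousOn f (Icc 0 1) := fun t ht => (hf_deriv t ht).continuousWithinAt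
  have hgpos : ∀ t ∈ Ioo (0 : ℝ) 1, 0 < g t := fun t ht => hg_pos t (Ioo_subset_Icc_self ht)
  have hθsI : θs ∈ Icc (0 : ℝ) 1 := Ioo_subset_Icc_self hθs
  have hEAO_mem := mem_Ioo_integral_of_isGreatest hf hf_pos hf_one hg_cont hpsi_mono hθsI hθs0
    hgpos hEAO
  have hA := hEAO_mem.1.trans hEAO_mem.2
  have hδ₀ : piEAO / (∫ θ in θs..1, calG g (psi f θ) * f θ) ∈ Ioo (0 : ℝ) 1 :=
    ⟨div_pos hEAO_mem.1 hA, (div_lt_one hA).2 hEAO_mem.2⟩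
  refine (convexOn_of_isGreatest (convex_Icc 0 1)
    (fun x _ => convexOn_PiD f g θss x (convex_Icc 0 1)) hpiD).existsUnique_crossing ?_ hδ₀ ?_
  · obtain ⟨x, hx, hxe⟩ := (hpiD 0 (left_mem_Icc.2 zero_le_one)).1
    exact hxe ▸ PiD_zero_lt hf hf_pos hf_one hg_cont hgpos hg_one θss
      (fun p hp => hEAO.2 ⟨p, hp, rfl⟩) hEAO_mem.1 hx
  · obtain ⟨x, hx, hlt⟩ := exists_PiD_gt hf hf_pos hf_one hg_cont hpsi_mono hθsI hθs0 hgpos hg_one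
      hθss (Ioo_subset_Ico_self hδ₀)
    rw [div_mul_cancel₀ _ hA.ne'] at hlt
    exact hlt.trans_le ((hpiD _ (Ioo_subset_Icc_self hδ₀)).2 ⟨x, hx, rfl⟩)

/-- there is a unique threshold discount factor d** in (0,1) at which the
optimal dynamic-mechanism profit equals the optimal ex-ante (at-will) profit, with
piD d > piEAO above it and piD d < piEAO below it; moreover d** < piEAO / A. -/
theorem stmt0
    (f g : ℝ → ℝ)
    (hf_int : IntegrableOn f (Set.Icc 0 1))
    (hg_int : IntegrableOn g (Set.Icc 0 1))
    (hf_ae : ∀ᵐ t, t ∈ Set.Icc (0:ℝ) 1 → 0 < f t)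
    (hg_ae : ∀ᵐ t, t ∈ Set.Icc (0:ℝ) 1 → 0 < g t)
    (hf_one : cdf f 1 = 1)
    (hg_one : cdf g 1 = 1)
    (hg_cont : ContinuousOn g (Set.Icc 0 1))
    (hg_pos : ∀ t ∈ Set.Icc (0:ℝ) 1, 0 < g t)
    (hf_pos : ∀ t ∈ Set.Icc (0:ℝ) 1, 0 < f t)
    (fd : ℝ → ℝ) (hfd_cont : ContinuousOn fd (Set.Icc 0 1))
    (hf_deriv : ∀ t ∈ Set.Icc (0:ℝ) 1, HasDerivWithinAt f (fd t) (Set.Icc 0 1) t)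
    (hpsi_mono : StrictMonoOn (psi f) (Set.Icc 0 1))
    (hpsiT_deriv : ∀ x ∈ Set.Ioc (0:ℝ) 1, ∃ d : ℝ → ℝ, ContinuousOn d (Set.Icc 0 x) ∧
      ∀ θ ∈ Set.Icc (0:ℝ) x, 0 < d θ ∧ HasDerivWithinAt (psiT f x) (d θ) (Set.Icc 0 x) θ)
    (θs : ℝ) (hθs : θs ∈ Set.Ioo (0:ℝ) 1) (hθs0 : psi f θs = 0)
    (θss : ℝ → ℝ)
    (hθss : ∀ x ∈ Set.Ioc (0:ℝ) 1, θss x ∈ Set.Ioo 0 x ∧ psiT f x (θss x) = 0)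
    (piD : ℝ → ℝ)
    (hpiD : ∀ δ ∈ Set.Icc (0:ℝ) 1,
      IsGreatest ((fun x => PiD f g θss x δ) '' Set.Icc (0:ℝ) 1) (piD δ))
    (piEAO : ℝ)
    (hEAO : IsGreatest ((fun p => (1 - cdf f p) * calG g p) '' Set.Icc (0:ℝ) 1) piEAO) :
    ∃! d : ℝ, d ∈ Set.Ioo (0:ℝ) 1 ∧ piD d = piEAO ∧
      (∀ δ ∈ Set.Ioo d 1, piEAO < piD δ) ∧
      (∀ δ ∈ Set.Ioo (0:ℝ) d, piD δ < piEAO) ∧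
      d < piEAO / (∫ θ in θs..1, calG g (psi f θ) * f θ) :=
  stmt0_general f g hf_one hg_one hg_cont hg_pos hf_pos fd hf_deriv hpsi_mono θs hθs hθs0 θss hθss
    piD hpiD piEAO hEAO
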